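/- Let α ∈ [0,1), let f(α) = 20 if α ∈ [0,1/2], f(α) = 25 if α ∈ (1/2,5/7], and f(α) = 7/(1−α) + 3 if α ∈ (5/7,1). Let s ≥ 1 be an integer and set n = s + ⌊3s/2⌋ + 1. If n ≥ f(α), then the A_α-spectral radius of G = K_s ∨ ((⌊3s/2⌋+1)K₁) satisfies ρ_α(G) < n − 3. -/

import Mathlib

open Finset

/-- The join `G ∨g H` of two graphs: the disjoint union together with all edges
between the two parts. -/
def SimpleGraph.gjoin {α β : Type*} (G : SimpleGraph α) (H : SimpleGraph β) :
    SimpleGraph (α ⊕ β) where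
  Adj u v := match u, v with
    | Sum.inl u, Sum.inl v => G.Adj u v
    | Sum.inr u, Sum.inr v => H.Adj u v
    | _, _ => True
  symm := ⟨fun u v => match u, v with
    | Sum.inl u, Sum.inl v => G.adj_symm
    | Sum.inr u, Sum.inr v => H.adj_symm
    | Sum.inl _, Sum.inr _ | Sum.inr _, Sum.inl _ => fun _ => trivial⟩
  loopless := ⟨fun u => by cases u <;> simp⟩

infixl:60 " ∨g " => SimpleGraph.gjoin

/-- The `A_α`-matrix `α • D(G) + (1-α) • A(G)` of a graph `G`. -/
noncomputable def aAlphaMatrix {V : Type*} [Fintype V] [DecidableEq V]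
    (α : ℝ) (G : SimpleGraph V) : Matrix V V ℝ := by
  classical
  exact α • Matrix.diagonal (fun v => (G.degree v : ℝ)) + (1 - α) • G.adjMatrix ℝ

/-- The `A_α`-spectral radius `ρ_α(G)`: the largest eigenvalue of `A_α(G)`. -/
noncomputable def rhoAlpha {V : Type*} [Fintype V] [DecidableEq V]
    (α : ℝ) (G : SimpleGraph V) : ℝ :=
  sSup (spectrum ℝ (aAlphaMatrix α G))

/-- The signless Laplacian matrix `Q(G) = D(G) + A(G)`. -/
noncomputable def signlessLaplacian {V : Type*} [Fintype V] [DecidableEq V]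
    (G : SimpleGraph V) : Matrix V V ℝ := by
  classical
  exact Matrix.diagonal (fun v => (G.degree v : ℝ)) + G.adjMatrix ℝ

/-- `q(G)`: the largest eigenvalue of the signless Laplacian matrix of `G`. -/
noncomputable def qIndex {V : Type*} [Fintype V] [DecidableEq V]
    (G : SimpleGraph V) : ℝ :=
  sSup (spectrum ℝ (signlessLaplacian G))

/-- The number of edges (the size) of a graph. -/
noncomputable def edgeCount {V : Type*} [Fintype V] [DecidableEq V]
    (G : SimpleGraph V) : ℕ := by
  classical
  exact G.edgeFinset.card

/-- `i(G - S)`: the number of isolated vertices of the graph obtained from `G`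
by deleting the vertices of `S` together with all edges incident to `S`. -/
noncomputable def isolGminus {V : Type*} [Fintype V] [DecidableEq V]
    (G : SimpleGraph V) (S : Finset V) : ℕ := by
  classical
  exact (Finset.univ.filter (fun v => v ∉ S ∧ ∀ u, G.Adj v u → u ∈ S)).card

/-- `F(n)`: the edge bound from Theorem 1.1. -/
def Fbound (n : ℕ) : ℕ :=
  if n = 6 then 9 else if n = 8 then 18 else (n - 2).choose 2 + 2

/-- `f(α)`: the order bound from Theorem 1.2. -/
noncomputable def fAlpha (α : ℝ) : ℝ :=
  if α ≤ 1 / 2 then 20 else if α ≤ 5 / 7 then 25 else 7 / (1 - α) + 3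

/-!
Write a vector on `K_s ∨ mK₁` as `x = (u, w)`, with `u` on the clique and `w` on the independent
set, and put `β = 1 - α`. The quadratic form of `A_α` only involves `‖u‖²`, `‖w‖²`, `∑ u` and
`∑ w`; after the Cauchy–Schwarz bounds `(∑ u)² ≤ s ‖u‖²` and `(∑ w)² ≤ m ‖w‖²`, the inequality
`xᵀ A_α x < (n - 3) ‖x‖²` reduces to the positive definiteness of a `2 × 2` form, that is, to
`0 < β m - 2`, `0 < β s + m - 3` and `β² s m < (β m - 2)(β s + m - 3)`. All three follow from
`6 ≤ β (3m - 13)`, and `n ≥ f(α)` gives this in each of the three ranges of `α`.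
-/

open Matrix

lemma Matrix.sum_elim_dotProduct_sum_elim {m n R : Type*} [Fintype m] [Fintype n] [Mul R]
    [AddCommMonoid R] (u u' : m → R) (w w' : n → R) :
    Sum.elim u w ⬝ᵥ Sum.elim u' w' = u ⬝ᵥ u' + w ⬝ᵥ w' :=
  Fintype.sum_sum_type _

lemma Matrix.dotProduct_of_one_mulVec {m n R : Type*} [Fintype m] [Fintype n] [Semiring R]
    (u : m → R) (w : n → R) :
    u ⬝ᵥ (of (fun _ _ => (1 : R)) *ᵥ w) = (∑ i, u i) * (∑ j, w j) := by
  simp [dotProduct, mulVec, Finset.sum_mul]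

lemma Matrix.lt_of_mem_spectrum {ι : Type*} [Fintype ι] [DecidableEq ι] {M : Matrix ι ι ℝ}
    {c μ : ℝ} (h : ∀ x ≠ 0, x ⬝ᵥ (M *ᵥ x) < c * (x ⬝ᵥ x)) (hμ : μ ∈ spectrum ℝ M) : μ < c := by
  rw [← spectrum_toLin', ← Module.End.hasEigenvalue_iff_mem_spectrum] at hμ
  obtain ⟨x, hx⟩ := hμ.exists_hasEigenvector
  have hMx : M *ᵥ x = μ • x := by simpa using hx.apply_eq_smul
  have hxx : 0 < x ⬝ᵥ x := by simpa using dotProduct_star_self_pos_iff.2 hx.2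
  have hlt := h x hx.2
  rw [hMx, dotProduct_smul, smul_eq_mul] at hlt
  exact lt_of_mul_lt_mul_right hlt hxx.le

-- `0 < c` is needed because `sSup ∅ = 0` when `M` has no real eigenvalue.
lemma Matrix.sSup_spectrum_lt {ι : Type*} [Fintype ι] [DecidableEq ι] {M : Matrix ι ι ℝ}
    {c : ℝ} (hc : 0 < c) (h : ∀ x ≠ 0, x ⬝ᵥ (M *ᵥ x) < c * (x ⬝ᵥ x)) :
    sSup (spectrum ℝ M) < c := by
  obtain he | hne := (spectrum ℝ M).eq_empty_or_nonempty
  · rwa [he, Real.sSup_empty]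
  · exact lt_of_mem_spectrum h (hne.csSup_mem M.finite_spectrum)

namespace SimpleGraph

variable {α β : Type*} (G : SimpleGraph α) (H : SimpleGraph β)

@[simp]
lemma gjoin_adj_inl_inl {a a' : α} : (G ∨g H).Adj (.inl a) (.inl a') ↔ G.Adj a a' := Iff.rfl

@[simp]
lemma gjoin_adj_inr_inr {b b' : β} : (G ∨g H).Adj (.inr b) (.inr b') ↔ H.Adj b b' := Iff.rfl

@[simp]
lemma gjoin_adj_inl_inr {a : α} {b : β} : (G ∨g H).Adj (.inl a) (.inr b) := trivial

@[simp]
lemma gjoin_adj_inr_inl {a : α} {b : β} : (G ∨g H).Adj (.inr b) (.inl a) := trivial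

lemma neighborFinset_gjoin_inl [Fintype α] [Fintype β] [DecidableRel G.Adj]
    [DecidableRel (G ∨g H).Adj] (a : α) :
    (G ∨g H).neighborFinset (.inl a) = (G.neighborFinset a).disjSum Finset.univ := by
  ext (a' | b) <;> simp

lemma neighborFinset_gjoin_inr [Fintype α] [Fintype β] [DecidableRel H.Adj]
    [DecidableRel (G ∨g H).Adj] (b : β) :
    (G ∨g H).neighborFinset (.inr b) = Finset.univ.disjSum (H.neighborFinset b) := by
  ext (a | b') <;> simp

lemma degree_gjoin_inl [Fintype α] [Fintype β] [DecidableRel G.Adj]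
    [DecidableRel (G ∨g H).Adj] (a : α) :
    (G ∨g H).degree (.inl a) = G.degree a + Fintype.card β := by
  rw [← card_neighborFinset_eq_degree, neighborFinset_gjoin_inl, Finset.card_disjSum,
    card_neighborFinset_eq_degree, Finset.card_univ]

lemma degree_gjoin_inr [Fintype α] [Fintype β] [DecidableRel H.Adj]
    [DecidableRel (G ∨g H).Adj] (b : β) :
    (G ∨g H).degree (.inr b) = Fintype.card α + H.degree b := by
  rw [← card_neighborFinset_eq_degree, neighborFinset_gjoin_inr, Finset.card_disjSum,
    card_neighborFinset_eq_degree, Finset.card_univ]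

lemma adjMatrix_gjoin [DecidableRel G.Adj] [DecidableRel H.Adj] [DecidableRel (G ∨g H).Adj]
    (R : Type*) [Zero R] [One R] :
    (G ∨g H).adjMatrix R =
      fromBlocks (G.adjMatrix R) (of fun _ _ => 1) (of fun _ _ => 1) (H.adjMatrix R) := by
  ext (a | b) (a' | b') <;> simp

lemma dotProduct_adjMatrix_gjoin_mulVec [Fintype α] [Fintype β] [DecidableRel G.Adj]
    [DecidableRel H.Adj] [DecidableRel (G ∨g H).Adj] {R : Type*} [CommSemiring R]
    (u : α → R) (w : β → R) :
    Sum.elim u w ⬝ᵥ ((G ∨g H).adjMatrix R *ᵥ Sum.elim u w) =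
      u ⬝ᵥ (G.adjMatrix R *ᵥ u) + 2 * (∑ a, u a) * (∑ b, w b) + w ⬝ᵥ (H.adjMatrix R *ᵥ w) := by
  simp only [adjMatrix_gjoin, fromBlocks_mulVec, Sum.elim_comp_inl, Sum.elim_comp_inr,
    sum_elim_dotProduct_sum_elim, dotProduct_add, dotProduct_of_one_mulVec]
  ring

lemma adjMatrix_top_eq_of_one_sub_one {V R : Type*} [DecidableEq V] [Ring R] :
    (⊤ : SimpleGraph V).adjMatrix R = of (fun _ _ => 1) - 1 := by
  ext i j
  by_cases h : i = j <;> simp [h, one_apply]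

lemma dotProduct_adjMatrix_top_mulVec {V R : Type*} [Fintype V] [DecidableEq V] [Ring R]
    (u : V → R) : u ⬝ᵥ ((⊤ : SimpleGraph V).adjMatrix R *ᵥ u) = (∑ v, u v) ^ 2 - u ⬝ᵥ u := by
  rw [adjMatrix_top_eq_of_one_sub_one, sub_mulVec, one_mulVec, dotProduct_sub,
    dotProduct_of_one_mulVec, sq]

end SimpleGraph

lemma dotProduct_aAlphaMatrix_join_mulVec (α : ℝ) {s m : ℕ} (hs : 1 ≤ s) (u : Fin s → ℝ)
    (w : Fin m → ℝ) :
    Sum.elim u w ⬝ᵥ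
        (aAlphaMatrix α ((⊤ : SimpleGraph (Fin s)) ∨g (⊥ : SimpleGraph (Fin m))) *ᵥ Sum.elim u w) =
      α * ((s - 1 + m) * (u ⬝ᵥ u) + s * (w ⬝ᵥ w)) +
        (1 - α) * ((∑ i, u i) ^ 2 - u ⬝ᵥ u + 2 * (∑ i, u i) * (∑ j, w j)) := by
  classical
  have hdeg : Sum.elim u w ⬝ᵥ (diagonal (fun v =>
        (((⊤ : SimpleGraph (Fin s)) ∨g (⊥ : SimpleGraph (Fin m))).degree v : ℝ)) *ᵥ Sum.elim u w) =
      (s - 1 + m) * (u ⬝ᵥ u) + s * (w ⬝ᵥ w) := by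
    simp [dotProduct, Fintype.sum_sum_type, mulVec_diagonal, SimpleGraph.degree_gjoin_inl,
      SimpleGraph.degree_gjoin_inr, Finset.mul_sum, Nat.cast_sub hs, mul_left_comm]
  rw [aAlphaMatrix]
  simp only [add_mulVec, smul_mulVec, dotProduct_add, dotProduct_smul, smul_eq_mul, hdeg,
    SimpleGraph.dotProduct_adjMatrix_gjoin_mulVec, SimpleGraph.dotProduct_adjMatrix_top_mulVec,
    SimpleGraph.adjMatrix_bot, zero_mulVec, dotProduct_zero]
  ring

lemma binary_form_pos {p q r a b : ℝ} (hp : 0 < p) (hpr : q ^ 2 < p * r) (hab : a ≠ 0 ∨ b ≠ 0) :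
    0 < p * a ^ 2 - 2 * q * a * b + r * b ^ 2 := by
  rcases eq_or_ne b 0 with rfl | hb
  · have ha : a ≠ 0 := by simpa using hab
    simpa using mul_pos hp (pow_two_pos_of_ne_zero ha)
  · have hsq : p * (p * a ^ 2 - 2 * q * a * b + r * b ^ 2) =
        (p * a - q * b) ^ 2 + (p * r - q ^ 2) * b ^ 2 := by ring
    refine pos_of_mul_pos_right (hsq ▸ ?_) hp.le
    exact add_pos_of_nonneg_of_pos (sq_nonneg _)
      (mul_pos (sub_pos.2 hpr) (pow_two_pos_of_ne_zero hb))

lemma block_form_pos {β S M P Q A B : ℝ} (hS : 0 < S) (hM : 0 < M)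
    (hK₁ : 0 < β * M - 2) (hK₂ : 0 < β * S + M - 3)
    (hdet : β ^ 2 * S * M < (β * M - 2) * (β * S + M - 3))
    (hA : A ^ 2 ≤ S * P) (hB : B ^ 2 ≤ M * Q) (hPQ : 0 < P + Q) :
    0 < (β * (S + M) - 2) * P + (β * S + M - 3) * Q - β * (A ^ 2 + 2 * A * B) := by
  have hβ : 0 < β := by nlinarith
  have hP : 0 ≤ P := by nlinarith
  have hQ : 0 ≤ Q := by nlinarith
  by_cases hAB : A = 0 ∧ B = 0
  · obtain ⟨rfl, rfl⟩ := hAB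
    have hK : 0 < β * (S + M) - 2 := by nlinarith
    rcases hP.lt_or_eq with hP | rfl
    · nlinarith [mul_pos hK hP, mul_nonneg hK₂.le hQ]
    · nlinarith [mul_pos hK₂ (by linarith : 0 < Q)]
  · have hbin := binary_form_pos (a := A) (b := B) (mul_pos hM hK₁) (q := β * S * M)
      (r := S * (β * S + M - 3)) (by nlinarith [mul_lt_mul_of_pos_left hdet (mul_pos hS hM)])
      (not_and_or.1 hAB)
    have hsplit : S * M * ((β * (S + M) - 2) * P + (β * S + M - 3) * Q
          - β * (A ^ 2 + 2 * A * B)) =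
        (M * (β * M - 2) * A ^ 2 - 2 * (β * S * M) * A * B + S * (β * S + M - 3) * B ^ 2)
          + M * (β * S + (β * M - 2)) * (S * P - A ^ 2)
          + S * (β * S + M - 3) * (M * Q - B ^ 2) := by
      ring
    refine pos_of_mul_pos_right (hsplit ▸ ?_) (mul_pos hS hM).le
    have h₁ : 0 ≤ M * (β * S + (β * M - 2)) * (S * P - A ^ 2) :=
      mul_nonneg (mul_nonneg hM.le (by nlinarith)) (by linarith)
    have h₂ : 0 ≤ S * (β * S + M - 3) * (M * Q - B ^ 2) :=
      mul_nonneg (mul_nonneg hS.le hK₂.le) (by linarith)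
    linarith

-- `(β M - 2)(β S + M - 3) - β² S M = β (M² - 3M - 2S) - 2(M - 3)`, and `2S ≤ (4M - 2)/3`.
lemma posDef_conditions_of_six_le {β S M : ℝ} (hβ : 0 < β) (hS : 0 ≤ S)
    (hSM : 3 * S + 1 ≤ 2 * M) (h : 6 ≤ β * (3 * M - 13)) :
    0 < β * M - 2 ∧ 0 < β * S + M - 3 ∧ β ^ 2 * S * M < (β * M - 2) * (β * S + M - 3) := by
  have hM : 13 / 3 < M := by nlinarith
  refine ⟨by nlinarith, by nlinarith, ?_⟩
  nlinarith [mul_le_mul_of_nonneg_left hSM hβ.le,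
    mul_le_mul_of_nonneg_left h (by linarith : (0 : ℝ) ≤ M)]

lemma six_le_mul_of_fAlpha_le {α N M : ℝ} (hα1 : α < 1) (hN : fAlpha α ≤ N)
    (hNM : 3 * N + 1 ≤ 5 * M) : 6 ≤ (1 - α) * (3 * M - 13) := by
  unfold fAlpha at hN
  split_ifs at hN with h₁ h₂
  · nlinarith
  · nlinarith
  · have h₃ : 7 ≤ (N - 3) * (1 - α) := (div_le_iff₀ (by linarith)).1 (by linarith)
    nlinarith

lemma dotProduct_aAlphaMatrix_join_mulVec_lt {α : ℝ} {s m : ℕ} (hα1 : α < 1) (hs : 1 ≤ s)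
    (hsm : 3 * s + 1 ≤ 2 * m) (h6 : 6 ≤ (1 - α) * (3 * m - 13)) (x : Fin s ⊕ Fin m → ℝ)
    (hx : x ≠ 0) :
    x ⬝ᵥ (aAlphaMatrix α ((⊤ : SimpleGraph (Fin s)) ∨g (⊥ : SimpleGraph (Fin m))) *ᵥ x) <
      (s + m - 3) * (x ⬝ᵥ x) := by
  obtain ⟨u, w, rfl⟩ : ∃ u w, x = Sum.elim u w := ⟨_, _, (Sum.elim_comp_inl_inr x).symm⟩
  have hxx : 0 < u ⬝ᵥ u + w ⬝ᵥ w := by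
    rw [← sum_elim_dotProduct_sum_elim]
    simpa using dotProduct_star_self_pos_iff.2 hx
  rw [dotProduct_aAlphaMatrix_join_mulVec α hs, sum_elim_dotProduct_sum_elim]
  obtain ⟨hK₁, hK₂, hdet⟩ := posDef_conditions_of_six_le (sub_pos.2 hα1) (Nat.cast_nonneg s)
    (by exact_mod_cast hsm) h6
  have hu : (∑ i, u i) ^ 2 ≤ s * (u ⬝ᵥ u) := by
    simpa [dotProduct, sq] using sq_sum_le_card_mul_sum_sq (s := Finset.univ) (f := u)
  have hw : (∑ j, w j) ^ 2 ≤ m * (w ⬝ᵥ w) := by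
    simpa [dotProduct, sq] using sq_sum_le_card_mul_sum_sq (s := Finset.univ) (f := w)
  have hm : (0 : ℝ) < m := by exact_mod_cast (by omega : 0 < m)
  linear_combination block_form_pos (by exact_mod_cast hs) hm hK₁ hK₂ hdet hu hw hxx

theorem rhoAlpha_case21_lt_general (α : ℝ) (hα1 : α < 1)
    (s n : ℕ) (hs : 1 ≤ s) (hn : n = s + 3 * s / 2 + 1) (hfn : fAlpha α ≤ (n : ℝ)) :
    rhoAlpha α ((⊤ : SimpleGraph (Fin s)) ∨g (⊥ : SimpleGraph (Fin (3 * s / 2 + 1))))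
      < (n : ℝ) - 3 := by
  set m := 3 * s / 2 + 1
  have hnm : (n : ℝ) = s + m := by exact_mod_cast (by omega : n = s + m)
  have hsm : 3 * s + 1 ≤ 2 * m := by omega
  have hnm5 : 3 * (n : ℝ) + 1 ≤ 5 * m := by exact_mod_cast (by omega : 3 * n + 1 ≤ 5 * m)
  have h6 := six_le_mul_of_fAlpha_le hα1 hfn hnm5
  rw [rhoAlpha, hnm]
  refine Matrix.sSup_spectrum_lt ?_ (dotProduct_aAlphaMatrix_join_mulVec_lt hα1 hs hsm h6)
  nlinarith

theorem rhoAlpha_case21_lt (α : ℝ) (hα0 : 0 ≤ α) (hα1 : α < 1)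
    (s n : ℕ) (hs : 1 ≤ s) (hn : n = s + 3 * s / 2 + 1) (hfn : fAlpha α ≤ (n : ℝ)) :
    rhoAlpha α ((⊤ : SimpleGraph (Fin s)) ∨g (⊥ : SimpleGraph (Fin (3 * s / 2 + 1))))
      < (n : ℝ) - 3 :=
  rhoAlpha_case21_lt_general α hα1 s n hs hn hfn
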